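/- arXiv:1705.03316 — 7 statements merged into one kernel-verified Lean document; each statement's English description precedes it below -/
import Mathlib

section
/- Let G be a finite abelian group with |G| = m and let A ⊆ G. If R_A(g) ≤ 5 for all g ∈ G, then the number of elements g ∈ G with R_A(g) = 0 satisfies |S_0| ≥ (1/4)m − √(5m). -/
/-- `repFn A g` is the number of ordered pairs `(a, a') ∈ A × A` with `a + a' = g`. -/
def repFn {G : Type*} [AddCommGroup G] [DecidableEq G] (A : Finset G) (g : G) : ℕ :=
  ((A ×ˢ A).filter fun p => p.1 + p.2 = g).card

/-!
Write `r = A ⋆ A` (so `r = repFn A`) and `d = A ⋆ (-A)`. For `0 ≤ n ≤ 5`,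
`n² + 8 ≤ 8·[n = 0] + 6n + 3·[n odd]`. Summing over `G`, with `∑ r = |A|²`, `∑ r² = E(A)` and
`r g` odd only if `g = a + a` for some `a ∈ A`, gives `8m + E(A) ≤ 8|S₀| + 6|A|² + 3|A|`.
On the other hand `E(A) = ∑ d²`, `∑ d = |A|²`, `d 0 = |A|`, and `(n - 2)(n - 3) ≥ 0` on `ℤ`
with the term at `0` kept exactly gives `E(A) ≥ 6|A|² - 5|A| - 6m + 6`. Hence
`8|S₀| ≥ 2m - 8|A|`, and `|A|² = ∑ r ≤ 5m`.
-/

open scoped Combinatorics.Additive Pointwise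

namespace Finset

lemma even_card_of_involution {α : Type*} {s : Finset α} (f : α → α)
    (hf_mem : ∀ a ∈ s, f a ∈ s) (hf_ne : ∀ a ∈ s, f a ≠ a) (hf_invol : ∀ a ∈ s, f (f a) = a) :
    Even #s := by
  rw [← ZMod.natCast_eq_zero_iff_even, card_eq_sum_ones, Nat.cast_sum, Nat.cast_one]
  exact sum_involution (fun a _ => f a) (fun _ _ => by decide) (fun a ha _ => hf_ne a ha)
    hf_mem hf_invol

section AddGroup

variable {G : Type*} [AddGroup G] [DecidableEq G]

lemma addConvolution_neg_self_zero (A : Finset G) : A.addConvolution (-A) 0 = #A := by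
  simp [← card_inter_vadd_neg]

variable [Fintype G]

lemma sum_addConvolution (A B : Finset G) : ∑ x, A.addConvolution B x = #A * #B := by
  rw [← card_product, card_eq_sum_card_fiberwise (f := fun ab => ab.1 + ab.2) (t := univ)
    (fun _ _ => mem_coe.2 (mem_univ _))]
  rfl

lemma addEnergy_eq_sum_addConvolution_sq (s t : Finset G) :
    E[s, t] = ∑ x, s.addConvolution t x ^ 2 :=
  addEnergy_eq_sum_sq s t

lemma card_sq_le_mul_card_of_addConvolution_le {A : Finset G} {c : ℕ}
    (h : ∀ g, A.addConvolution A g ≤ c) :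
    #A ^ 2 ≤ c * Fintype.card G := by
  rw [sq, ← sum_addConvolution, mul_comm, ← smul_eq_mul, ← card_univ, ← sum_const]
  exact sum_le_sum fun g _ => h g

end AddGroup

variable {G : Type*} [AddCommGroup G] [DecidableEq G]

lemma addEnergy_neg_right (s t : Finset G) : E[s, -t] = E[s, t] := by
  refine card_nbij' (fun x => (x.1, -x.2.2, -x.2.1)) (fun x => (x.1, -x.2.2, -x.2.1))
    ?_ ?_ (fun _ _ => by simp) (fun _ _ => by simp)
  all_goals
    rintro ⟨⟨a₁, a₂⟩, b₁, b₂⟩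
    simp only [coe_filter, Set.mem_ofPred_eq, mem_product, mem_neg', neg_neg]
    grind

lemma even_addConvolution_self {A : Finset G} {g : G} (h : ∀ a ∈ A, a + a ≠ g) :
    Even (A.addConvolution A g) :=
  even_card_of_involution Prod.swap
    (fun p hp => by simp_all [add_comm p.2])
    (fun p hp hswap => h p.1 (mem_product.1 (mem_filter.1 hp).1).1 <| by
      rw [← (mem_filter.1 hp).2, ← congrArg Prod.fst hswap, Prod.fst_swap])
    (fun _ _ => Prod.swap_swap _)

variable [Fintype G]

lemma sum_addConvolution_neg_sq (A : Finset G) :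
    ∑ x, A.addConvolution (-A) x ^ 2 = E[A] := by
  rw [← addEnergy_neg_right A A, addEnergy_eq_sum_addConvolution_sq]

lemma card_odd_addConvolution_self_le (A : Finset G) :
    #{g | Odd (A.addConvolution A g)} ≤ #A := by
  refine (card_le_card fun g hg => ?_).trans (card_image_le (f := fun a => a + a))
  by_contra hg'
  exact (Nat.not_odd_iff_even.2 (even_addConvolution_self fun a ha hag =>
    hg' (mem_image.2 ⟨a, ha, hag⟩))) (mem_filter.1 hg).2

lemma six_mul_card_sq_add_six_le_addEnergy_add (A : Finset G) :
    6 * #A ^ 2 + 6 ≤ E[A] + 5 * #A + 6 * Fintype.card G := by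
  have h_sq := congrArg (Nat.cast (R := ℤ)) (sum_addConvolution_neg_sq A)
  have h_sum := congrArg (Nat.cast (R := ℤ)) (sum_addConvolution A (-A))
  push_cast [card_neg] at h_sq h_sum
  set d := A.addConvolution (-A)
  have hd_nonneg (y : G) : 0 ≤ ((d y : ℤ) - 2) * (d y - 3) := by
    rcases le_or_gt (d y : ℤ) 2 with h | h <;> nlinarith
  have hd_zero : ((#A : ℤ) - 2) * (#A - 3) ≤ ∑ y, ((d y : ℤ) - 2) * (d y - 3) := by
    simpa [d, addConvolution_neg_self_zero] using
      single_le_sum (fun y _ => hd_nonneg y) (mem_univ (0 : G))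
  have hd_expand :
      ∑ y, ((d y : ℤ) - 2) * (d y - 3) = E[A] - 5 * #A ^ 2 + 6 * Fintype.card G := by
    simp only [show ∀ x : ℤ, (x - 2) * (x - 3) = x ^ 2 - 5 * x + 6 from fun x => by ring,
      sum_add_distrib, sum_sub_distrib, ← mul_sum, sum_const, card_univ, nsmul_eq_mul]
    linear_combination h_sq - 5 * h_sum
  zify
  nlinarith

end Finset

lemma eight_add_sq_le_of_le_five {n : ℕ} (hn : n ≤ 5) :
    8 + n ^ 2 ≤ 8 * (if n = 0 then 1 else 0) + 6 * n + 3 * (if Odd n then 1 else 0) := by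
  interval_cases n <;> decide

section

open Finset

variable {G : Type*} [AddCommGroup G] [Fintype G] [DecidableEq G]

lemma addEnergy_add_le_of_addConvolution_le_five {A : Finset G}
    (h : ∀ g, A.addConvolution A g ≤ 5) :
    8 * Fintype.card G + E[A] ≤ 8 * #{g | A.addConvolution A g = 0} + 6 * #A ^ 2
      + 3 * #{g | Odd (A.addConvolution A g)} := by
  calc 8 * Fintype.card G + E[A] = ∑ g, (8 + A.addConvolution A g ^ 2) := by
        rw [sum_add_distrib, addEnergy_eq_sum_addConvolution_sq, sum_const, card_univ,
          smul_eq_mul, mul_comm]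
    _ ≤ ∑ g, (8 * (if A.addConvolution A g = 0 then 1 else 0) + 6 * A.addConvolution A g
          + 3 * (if Odd (A.addConvolution A g) then 1 else 0)) :=
        sum_le_sum fun g _ => eight_add_sq_le_of_le_five (h g)
    _ = _ := by
        simp only [sum_add_distrib, ← mul_sum, sum_boole, Nat.cast_id, sum_addConvolution, sq]

lemma two_mul_card_add_six_le_of_addConvolution_le_five {A : Finset G}
    (h : ∀ g, A.addConvolution A g ≤ 5) :
    2 * Fintype.card G + 6 ≤ 8 * #{g | A.addConvolution A g = 0} + 8 * #A := by
  have := addEnergy_add_le_of_addConvolution_le_five h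
  have := six_mul_card_sq_add_six_le_addEnergy_add A
  have := card_odd_addConvolution_self_le A
  omega

end

theorem stmt_0 {G : Type*} [AddCommGroup G] [Fintype G] [DecidableEq G]
    (m : ℕ) (hm : Fintype.card G = m) (A : Finset G)
    (h : ∀ g : G, repFn A g ≤ 5) :
    (((Finset.univ.filter fun g : G => repFn A g = 0).card : ℝ)) ≥
      (1 / 4 : ℝ) * m - Real.sqrt (5 * m) := by
  subst hm
  have hA : ∀ g, A.addConvolution A g ≤ 5 := h
  have h_zero : (2 * Fintype.card G + 6 : ℝ) ≤
      8 * (Finset.univ.filter fun g : G => repFn A g = 0).card + 8 * A.card := by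
    exact_mod_cast two_mul_card_add_six_le_of_addConvolution_le_five hA
  have h_card : (A.card : ℝ) ≤ Real.sqrt (5 * Fintype.card G) :=
    Real.le_sqrt_of_sq_le (by exact_mod_cast Finset.card_sq_le_mul_card_of_addConvolution_le hA)
  linarith
end

section
/- Let G be a finite abelian group with |G| = m and let A ⊆ G. If R_A(g) ≤ 5 for all g ∈ G, then the number of elements g ∈ G with R_A(g) = 0 satisfies |S_0| ≥ (1/4)m − |A| + 3/4. -/
/-!
Write `r = repFn A` and `d u = #{(a, a') ∈ A × A | a - a' = u}`; both `∑ r²` and `∑ d²` count the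
additive energy `E[A]`. For `0 ≤ n ≤ 5` one has `n² + 8·[n ≠ 0] ≤ 6n + 3·[n odd]`, and `r g` is odd
only if `g = x + x` with `x ∈ A` (the swap `(a, a') ↦ (a', a)` pairs up all other representations),
so summing gives `E[A] + 8 (m - |S₀|) ≤ 6|A|² + 3|A|`. On the other side `d 0 = |A|` and
`(d u - 2)(d u - 3) ≥ 0` for `u ≠ 0`, whence `E[A] ≥ 6|A|² - 5|A| - 6(m - 1)`. Together:
`8|S₀| ≥ 2m - 8|A| + 6`.
-/

open Finset
open scoped Combinatorics.Additive

namespace Finset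

variable {α β : Type*}

lemma even_card_of_involution_s1 (s : Finset α) (f : α → α) (hmem : ∀ a ∈ s, f a ∈ s)
    (hinv : ∀ a ∈ s, f (f a) = a) (hne : ∀ a ∈ s, f a ≠ a) : Even #s := by
  rw [← ZMod.natCast_eq_zero_iff_even, card_eq_sum_ones, Nat.cast_sum, Nat.cast_one]
  exact sum_involution (fun a _ => f a) (fun _ _ => by decide) (fun a ha _ => hne a ha) hmem hinv

lemma sum_card_filter_eq_sq [DecidableEq β] [Fintype β] (s : Finset α) (f : α → β) :
    ∑ b, #{a ∈ s | f a = b} ^ 2 = #{p ∈ s ×ˢ s | f p.1 = f p.2} := by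
  rw [card_eq_sum_card_fiberwise (f := fun p => f p.1) (t := univ) (fun _ _ => mem_univ _)]
  refine sum_congr rfl fun b _ => ?_
  rw [sq, ← card_product, filter_filter]
  congr 1
  ext p
  simp only [mem_filter, mem_product]
  grind

lemma five_mul_sum_le_sum_sq_add (s : Finset α) (f : α → ℕ) :
    5 * ∑ a ∈ s, f a ≤ ∑ a ∈ s, f a ^ 2 + 6 * #s := by
  rw [mul_sum, card_eq_sum_ones, mul_sum, ← sum_add_distrib]
  refine sum_le_sum fun a _ => ?_
  rcases le_or_gt (f a) 2 with h | h <;> nlinarith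

end Finset

section

variable {G : Type*} [AddCommGroup G] [DecidableEq G]

lemma addEnergy_eq_card_sub_eq (s : Finset G) :
    E[s] = #{p ∈ (s ×ˢ s) ×ˢ (s ×ˢ s) | p.1.1 - p.1.2 = p.2.1 - p.2.2} :=
  card_equiv ((Equiv.refl _).prodCongr (Equiv.prodComm _ _)) (by
    simp [sub_eq_sub_iff_add_eq_add, add_comm, and_comm, and_left_comm, and_assoc])

def diffRepFn (A : Finset G) (u : G) : ℕ := #{p ∈ A ×ˢ A | p.1 - p.2 = u}

lemma diffRepFn_zero (A : Finset G) : diffRepFn A 0 = #A := by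
  simp only [diffRepFn, sub_eq_zero, ← diag_eq_filter, diag_card]

lemma exists_add_self_eq_of_odd_repFn {A : Finset G} {g : G} (hodd : Odd (repFn A g)) :
    ∃ x ∈ A, x + x = g := by
  by_contra! hdiag
  refine Nat.not_even_iff_odd.2 hodd (even_card_of_involution_s1 _ Prod.swap ?_ ?_ ?_)
  · simp +contextual [add_comm]
  · simp
  · rintro ⟨x, y⟩ hp hxy
    simp only [Prod.swap_prod_mk, Prod.mk.injEq] at hxy
    simp only [mem_filter, mem_product] at hp
    exact hdiag x hp.1.1 (hxy.1 ▸ hp.2)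

variable [Fintype G]

lemma sum_repFn (A : Finset G) : ∑ g, repFn A g = #A ^ 2 := by
  rw [sq, ← card_product]
  exact (card_eq_sum_card_fiberwise fun _ _ => mem_univ _).symm

lemma sum_repFn_sq (A : Finset G) : ∑ g, repFn A g ^ 2 = E[A] :=
  (addEnergy_eq_sum_sq A A).symm

lemma sum_diffRepFn (A : Finset G) : ∑ u, diffRepFn A u = #A ^ 2 := by
  rw [sq, ← card_product]
  exact (card_eq_sum_card_fiberwise fun _ _ => mem_univ _).symm

lemma sum_diffRepFn_sq (A : Finset G) : ∑ u, diffRepFn A u ^ 2 = E[A] := by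
  rw [addEnergy_eq_card_sub_eq]
  exact sum_card_filter_eq_sq (A ×ˢ A) fun p => p.1 - p.2

lemma card_odd_repFn_le (A : Finset G) : #{g | Odd (repFn A g)} ≤ #A :=
  calc #{g | Odd (repFn A g)}
      ≤ #(A.image fun x => x + x) := card_le_card fun g hg => by
        simpa using exists_add_self_eq_of_odd_repFn (mem_filter.1 hg).2
    _ ≤ #A := card_image_le

lemma sq_add_eight_le_of_le_five {n : ℕ} (hn : n ≤ 5) :
    n ^ 2 + 8 * (if n ≠ 0 then 1 else 0) ≤ 6 * n + 3 * (if Odd n then 1 else 0) := by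
  interval_cases n <;> decide

lemma addEnergy_add_eight_mul_card_le {A : Finset G} (h : ∀ g, repFn A g ≤ 5) :
    E[A] + 8 * #{g | repFn A g ≠ 0} ≤ 6 * #A ^ 2 + 3 * #A := by
  have hsum := sum_le_sum fun g (_ : g ∈ univ) => sq_add_eight_le_of_le_five (h g)
  simp only [sum_add_distrib, ← mul_sum, sum_boole, Nat.cast_id, sum_repFn, sum_repFn_sq] at hsum
  linarith [card_odd_repFn_le A]

lemma six_mul_card_sq_add_six_le_addEnergy (A : Finset G) :
    6 * #A ^ 2 + 6 ≤ E[A] + 5 * #A + 6 * Fintype.card G := by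
  have h0 : (0 : G) ∈ univ := mem_univ 0
  have hsum := add_sum_erase univ (diffRepFn A) h0
  have hsq := add_sum_erase univ (fun u => diffRepFn A u ^ 2) h0
  have hcard := card_erase_add_one h0
  have hbound := five_mul_sum_le_sum_sq_add (univ.erase 0) (diffRepFn A)
  simp only [diffRepFn_zero, sum_diffRepFn, sum_diffRepFn_sq, card_univ] at hsum hsq hcard
  linarith

end

theorem stmt_1 {G : Type*} [AddCommGroup G] [Fintype G] [DecidableEq G]
    (m : ℕ) (hm : Fintype.card G = m) (A : Finset G)
    (h : ∀ g : G, repFn A g ≤ 5) :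
    (((Finset.univ.filter fun g : G => repFn A g = 0).card : ℝ)) ≥
      (1 / 4 : ℝ) * m - A.card + 3 / 4 := by
  subst hm
  have hsplit := card_filter_add_card_filter_not (s := univ) fun g => repFn A g = 0
  have hupper := addEnergy_add_eight_mul_card_le h
  have hlower := six_mul_card_sq_add_six_le_addEnergy A
  have hcount : 2 * Fintype.card G + 6 ≤ 8 * #{g | repFn A g = 0} + 8 * #A := by
    rw [card_univ] at hsplit
    linarith
  have hcountℝ : (2 * Fintype.card G + 6 : ℝ) ≤ 8 * #{g | repFn A g = 0} + 8 * #A := by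
    exact_mod_cast hcount
  linarith
end

section
/- Let G be a finite abelian group with |G| = m and let A ⊆ G. If R_A(g) ≤ 5 for all g ∈ G, then |S_0| + |S_4| ≥ (1/2)m − 3|A| + 1/2, where |S_0| and |S_4| denote the number of elements g ∈ G with R_A(g) = 0 and R_A(g) = 4, respectively. -/
open Finset
open scoped Pointwise Combinatorics.Additive

lemma Finset.even_card_of_involution_s4 {α : Type*} {s : Finset α} (σ : α → α)
    (hσ : ∀ x ∈ s, σ x ∈ s) (hσσ : ∀ x ∈ s, σ (σ x) = x) (hfix : ∀ x ∈ s, σ x ≠ x) :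
    Even #s := by
  rw [← ZMod.natCast_eq_zero_iff_even, card_eq_sum_ones, Nat.cast_sum]
  exact sum_involution (fun x _ => σ x) (fun _ _ => by decide) (fun x hx _ => hfix x hx) hσ hσσ

lemma three_mul_le_sq_add_two (k : ℕ) : 3 * k ≤ k ^ 2 + 2 := by
  rcases k with _ | _ | k
  · simp
  · simp
  · nlinarith

section AddCommGroup

variable {G : Type*} [AddCommGroup G] [DecidableEq G]

lemma repFn_eq_addConvolution (A : Finset G) : repFn A = A.addConvolution A := rfl

lemma Finset.addEnergy_neg_right_s4 (s t : Finset G) : E[s, -t] = E[s, t] :=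
  card_nbij' (fun x => (x.1, -x.2.2, -x.2.1)) (fun x => (x.1, -x.2.2, -x.2.1))
    (by simp [Set.MapsTo]; grind) (by simp [Set.MapsTo]; grind)
    (by simp [Set.LeftInvOn]) (by simp [Set.LeftInvOn])

lemma Finset.addConvolution_neg_self_zero_s4 (A : Finset G) : A.addConvolution (-A) 0 = #A := by
  simpa using (card_inter_vadd_neg A (-A) 0).symm

lemma Finset.exists_add_self_eq_of_odd_addConvolution_self {A : Finset G} {g : G}
    (hg : Odd (A.addConvolution A g)) : ∃ a ∈ A, a + a = g := by
  by_contra! hdiag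
  refine Nat.not_even_iff_odd.2 hg (even_card_of_involution_s4 Prod.swap ?_ ?_ ?_)
  · simp +contextual [add_comm]
  · simp
  · rintro ⟨a, b⟩ hab hswap
    simp only [Prod.swap_prod_mk, Prod.mk.injEq] at hswap
    simp only [mem_filter, mem_product] at hab
    exact hdiag a hab.1.1 (hswap.1 ▸ hab.2)

lemma Finset.card_filter_odd_addConvolution_self_le [Fintype G] (A : Finset G) :
    #{g | Odd (A.addConvolution A g)} ≤ #A :=
  calc #{g | Odd (A.addConvolution A g)}
      ≤ #(A.image fun a => a + a) := card_le_card fun g hg => by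
        simpa using exists_add_self_eq_of_odd_addConvolution_self (mem_filter.1 hg).2
    _ ≤ #A := card_image_le

variable [Fintype G]

lemma Finset.sum_addConvolution_s4 (A B : Finset G) : ∑ x, A.addConvolution B x = #A * #B := by
  rw [← card_product, card_eq_sum_card_fiberwise (f := fun p => p.1 + p.2) (t := univ)]
  · rfl
  · simp

lemma Finset.sum_sq_sub_two_addConvolution_self (A : Finset G) :
    ∑ g, ((A.addConvolution A g : ℝ) - 2) ^ 2 = (E[A] : ℝ) - 4 * #A ^ 2 + 4 * Fintype.card G := by
  have hsq : ∑ g, (A.addConvolution A g : ℝ) ^ 2 = (E[A] : ℝ) := by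
    exact_mod_cast (addEnergy_eq_sum_sq A A).symm
  have hsum : ∑ g, (A.addConvolution A g : ℝ) = #A ^ 2 := by
    exact_mod_cast (sum_addConvolution_s4 A A).trans (sq _).symm
  simp only [sub_sq, sum_add_distrib, sum_sub_distrib, ← sum_mul, ← mul_sum, hsq, hsum, sum_const,
    card_univ, nsmul_eq_mul]
  ring

lemma Finset.four_mul_card_sq_add_two_le_addEnergy (A : Finset G) :
    4 * #A ^ 2 + 2 ≤ E[A] + 3 * #A + 2 * Fintype.card G := by
  set r := A.addConvolution (-A)
  have hr0 : r 0 = #A := addConvolution_neg_self_zero_s4 A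
  have hsum : r 0 + ∑ d ∈ univ.erase 0, r d = #A ^ 2 := by
    rw [add_sum_erase _ _ (mem_univ 0), sum_addConvolution_s4, card_neg, sq]
  have hsq : r 0 ^ 2 + ∑ d ∈ univ.erase 0, r d ^ 2 = E[A] := by
    rw [add_sum_erase _ (fun d => r d ^ 2) (mem_univ 0), ← addEnergy_neg_right_s4]
    exact (addEnergy_eq_sum_sq A (-A)).symm
  have hcard : #(univ.erase (0 : G)) + 1 = Fintype.card G := card_erase_add_one (mem_univ 0)
  have hle : 3 * ∑ d ∈ univ.erase 0, r d ≤
      ∑ d ∈ univ.erase 0, r d ^ 2 + 2 * #(univ.erase (0 : G)) := by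
    rw [mul_sum, mul_comm, ← smul_eq_mul, ← sum_const, ← sum_add_distrib]
    exact sum_le_sum fun d _ => three_mul_le_sq_add_two (r d)
  rw [hr0] at hsum hsq
  linarith

end AddCommGroup

lemma sum_sub_two_sq_le_of_le_five {ι : Type*} (s : Finset ι) (f : ι → ℕ) (hf : ∀ i ∈ s, f i ≤ 5) :
    ∑ i ∈ s, ((f i : ℝ) - 2) ^ 2 ≤
      4 * (#{i ∈ s | f i = 0} : ℝ) + 4 * #{i ∈ s | f i = 4} + 9 * #{i ∈ s | Odd (f i)} := by
  simp only [natCast_card_filter, mul_sum, ← sum_add_distrib]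
  refine sum_le_sum fun i hi => ?_
  have := hf i hi
  interval_cases f i <;> norm_num

theorem stmt_4 {G : Type*} [AddCommGroup G] [Fintype G] [DecidableEq G]
    (m : ℕ) (hm : Fintype.card G = m) (A : Finset G)
    (h : ∀ g : G, repFn A g ≤ 5) :
    (((Finset.univ.filter fun g : G => repFn A g = 0).card : ℝ)) +
      ((Finset.univ.filter fun g : G => repFn A g = 4).card : ℝ) ≥
      (1 / 2 : ℝ) * m - 3 * A.card + 1 / 2 := by
  subst hm
  rw [repFn_eq_addConvolution] at h ⊢
  have hcount := sum_sub_two_sq_le_of_le_five univ _ fun g _ => h g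
  have hodd : (#{g | Odd (A.addConvolution A g)} : ℝ) ≤ #A := by
    exact_mod_cast card_filter_odd_addConvolution_self_le A
  have henergy : (4 * #A ^ 2 + 2 : ℝ) ≤ E[A] + 3 * #A + 2 * Fintype.card G := by
    exact_mod_cast four_mul_card_sq_add_two_le_addEnergy A
  have hexpand := sum_sq_sub_two_addConvolution_self A
  linarith
end

section
/- Let p be a prime and m = p² + p + 1. Then there exists a subset A ⊆ ℤ_m such that R_A(n) ≤ 2 for all n ∈ ℤ_m and the number of elements n ∈ ℤ_m with R_A(n) = 2 satisfies |S_2| = (1/2)m − 1/2. -/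
open Finset Polynomial

def IsSidon {G : Type*} [AddCommGroup G] (A : Finset G) : Prop :=
  ∀ a ∈ A, ∀ b ∈ A, ∀ c ∈ A, ∀ d ∈ A,
    a + b = c + d → (a = c ∧ b = d) ∨ (a = d ∧ b = c)

namespace IsSidon

variable {G : Type*} [AddCommGroup G] [DecidableEq G] {A : Finset G}

lemma filter_add_eq_subset (hA : IsSidon A) {a b : G} (ha : a ∈ A) (hb : b ∈ A) :
    (A ×ˢ A).filter (fun x => x.1 + x.2 = a + b) ⊆ {(a, b), (b, a)} := by
  rintro ⟨c, d⟩ hcd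
  simp only [mem_filter, mem_product] at hcd
  rcases hA c hcd.1.1 d hcd.1.2 a ha b hb hcd.2 with ⟨rfl, rfl⟩ | ⟨rfl, rfl⟩ <;> simp

lemma repFn_le_two (hA : IsSidon A) (n : G) : repFn A n ≤ 2 := by
  obtain ⟨⟨a, b⟩, hab⟩ | hempty :=
    ((A ×ˢ A).filter fun x => x.1 + x.2 = n).eq_empty_or_nonempty.symm
  · simp only [mem_filter, mem_product] at hab
    obtain ⟨⟨ha, hb⟩, rfl⟩ := hab
    exact (card_le_card (hA.filter_add_eq_subset ha hb)).trans card_le_two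
  · simp [repFn, hempty]

lemma repFn_add_of_ne (hA : IsSidon A) {a b : G} (ha : a ∈ A) (hb : b ∈ A) (hab : a ≠ b) :
    repFn A (a + b) = 2 := by
  have hfiber : (A ×ˢ A).filter (fun x => x.1 + x.2 = a + b) = {(a, b), (b, a)} := by
    refine (hA.filter_add_eq_subset ha hb).antisymm ?_
    simp [insert_subset_iff, ha, hb, add_comm b a]
  rw [repFn, hfiber, card_pair_eq_two_iff]
  simp [hab]

lemma repFn_eq_two_iff (hA : IsSidon A) {n : G} :
    repFn A n = 2 ↔ n ∈ A.offDiag.image fun x => x.1 + x.2 := by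
  refine ⟨fun h => ?_, ?_⟩
  · obtain ⟨⟨a, b⟩, hab⟩ : ((A ×ˢ A).filter fun x => x.1 + x.2 = n).Nonempty := by
      exact card_pos.mp (h ▸ two_pos : 0 < repFn A n)
    simp only [mem_filter, mem_product] at hab
    obtain ⟨⟨ha, hb⟩, rfl⟩ := hab
    refine mem_image.mpr ⟨(a, b), mem_offDiag.mpr ⟨ha, hb, ?_⟩, rfl⟩
    rintro (rfl : a = b)
    have : repFn A (a + a) ≤ 1 := (card_le_card (hA.filter_add_eq_subset ha ha)).trans (by simp)
    omega
  · simp only [mem_image, mem_offDiag]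
    rintro ⟨⟨a, b⟩, ⟨ha, hb, hab⟩, rfl⟩
    exact hA.repFn_add_of_ne ha hb hab

lemma filter_offDiag_add_eq (hA : IsSidon A) {a b : G} (ha : a ∈ A) (hb : b ∈ A)
    (hab : a ≠ b) :
    A.offDiag.filter (fun x => x.1 + x.2 = a + b) =
      (A ×ˢ A).filter (fun x => x.1 + x.2 = a + b) := by
  ext ⟨c, d⟩
  simp only [mem_filter, mem_offDiag, mem_product]
  refine ⟨fun h => ⟨⟨h.1.1, h.1.2.1⟩, h.2⟩, fun h => ⟨⟨h.1.1, h.1.2, ?_⟩, h.2⟩⟩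
  rintro rfl
  rcases hA c h.1.1 c h.1.1 a ha b hb h.2 with ⟨rfl, rfl⟩ | ⟨rfl, rfl⟩ <;> exact hab rfl

lemma two_mul_ncard_repFn_eq_two (hA : IsSidon A) :
    2 * {n | repFn A n = 2}.ncard = #A * (#A - 1) := by
  have hS : {n | repFn A n = 2} = ↑(A.offDiag.image fun x => x.1 + x.2) := by
    ext n; exact hA.repFn_eq_two_iff
  rw [hS, Set.ncard_coe_finset, Nat.mul_sub_one, ← offDiag_card,
    card_eq_sum_card_image (fun x : G × G => x.1 + x.2), sum_congr rfl (g := fun _ => 2),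
    sum_const, smul_eq_mul, mul_comm]
  simp only [mem_image, mem_offDiag]
  rintro _ ⟨⟨a, b⟩, ⟨ha, hb, hab⟩, rfl⟩
  rw [hA.filter_offDiag_add_eq ha hb hab, ← repFn, hA.repFn_add_of_ne ha hb hab]

end IsSidon

def IsSidonFamily {ι G : Type*} [AddCommGroup G] (g : ι → G) : Prop :=
  ∀ i j k l, g i + g j = g k + g l → (i = k ∧ j = l) ∨ (i = l ∧ j = k)

namespace IsSidonFamily

variable {ι G : Type*} [AddCommGroup G] {g : ι → G}

lemma injective (hg : IsSidonFamily g) : Function.Injective g := fun i j h => by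
  rcases hg i i j i (by rw [h]) with ⟨rfl, -⟩ | ⟨-, rfl⟩ <;> rfl

lemma isSidon_image [DecidableEq G] (hg : IsSidonFamily g) (s : Finset ι) :
    IsSidon (s.image g) := by
  simp only [IsSidon, mem_image]
  rintro _ ⟨i, -, rfl⟩ _ ⟨j, -, rfl⟩ _ ⟨k, -, rfl⟩ _ ⟨l, -, rfl⟩ h
  rcases hg i j k l h with ⟨rfl, rfl⟩ | ⟨rfl, rfl⟩ <;> simp

end IsSidonFamily

section MonicLinear

variable {k : Type*} [Field k]

/-- The monic polynomials of degree at most one, i.e. the points of the projective line over `k`,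
with `none` standing for the point at infinity. -/
noncomputable def monicLinear : Option k → k[X]
  | none => 1
  | some c => X - C c

lemma monicLinear_monic (o : Option k) : (monicLinear o).Monic := by
  cases o
  exacts [monic_one, monic_X_sub_C _]

lemma natDegree_monicLinear_le (o : Option k) : (monicLinear o).natDegree ≤ 1 := by
  cases o <;> simp [monicLinear]

lemma natDegree_monicLinear_mul_le (o o' : Option k) :
    (monicLinear o * monicLinear o').natDegree ≤ 2 :=
  natDegree_mul_le.trans (add_le_add (natDegree_monicLinear_le o) (natDegree_monicLinear_le o'))

lemma X_sub_C_dvd_monicLinear_iff {c : k} {o : Option k} :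
    X - C c ∣ monicLinear o ↔ o = some c := by
  rw [dvd_iff_isRoot]
  cases o <;> simp [monicLinear, sub_eq_zero, eq_comm]

lemma monicLinear_injective : Function.Injective (monicLinear (k := k)) := by
  intro o o' h
  rcases o with _ | c
  · rcases o' with _ | c'
    · rfl
    · exact X_sub_C_dvd_monicLinear_iff.mp (by rw [h]; exact dvd_rfl)
  · exact (X_sub_C_dvd_monicLinear_iff.mp (by rw [← h]; exact dvd_rfl)).symm

lemma monicLinear_mul_eq_mul_of_some {c : k} {o₂ o₃ o₄ : Option k}
    (h : monicLinear (some c) * monicLinear o₂ = monicLinear o₃ * monicLinear o₄) :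
    (some c = o₃ ∧ o₂ = o₄) ∨ (some c = o₄ ∧ o₂ = o₃) := by
  have hdvd : X - C c ∣ monicLinear o₃ * monicLinear o₄ := h ▸ dvd_mul_right _ _
  rcases (prime_X_sub_C c).dvd_or_dvd hdvd with h₃ | h₄
  · obtain rfl := X_sub_C_dvd_monicLinear_iff.mp h₃
    exact Or.inl ⟨rfl, monicLinear_injective <|
      mul_left_cancel₀ (monicLinear_monic _).ne_zero h⟩
  · obtain rfl := X_sub_C_dvd_monicLinear_iff.mp h₄
    refine Or.inr ⟨rfl, monicLinear_injective ?_⟩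
    exact mul_left_cancel₀ (monicLinear_monic (some c)).ne_zero (by rw [h, mul_comm])

lemma monicLinear_mul_eq_mul {o₁ o₂ o₃ o₄ : Option k}
    (h : monicLinear o₁ * monicLinear o₂ = monicLinear o₃ * monicLinear o₄) :
    (o₁ = o₃ ∧ o₂ = o₄) ∨ (o₁ = o₄ ∧ o₂ = o₃) := by
  match o₁, o₂, o₃, o₄ with
  | some _, _, _, _ => exact monicLinear_mul_eq_mul_of_some h
  | a, some c, d, e =>
    have := monicLinear_mul_eq_mul_of_some (c := c) (o₂ := a) (o₃ := d) (o₄ := e)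
      (by rw [mul_comm, h]); clear h; grind
  | _, _, some c, _ => have := monicLinear_mul_eq_mul_of_some (c := c) h.symm; clear h; grind
  | a, b, d, some c =>
    have := monicLinear_mul_eq_mul_of_some (c := c) (o₂ := d) (o₃ := a) (o₄ := b)
      (by rw [mul_comm, h]); clear h; grind
  | none, none, none, none => exact Or.inl ⟨rfl, rfl⟩

lemma monicLinear_mul_eq_C_mul {o₁ o₂ o₃ o₄ : Option k} {l : k}
    (h : monicLinear o₃ * monicLinear o₄ = C l * (monicLinear o₁ * monicLinear o₂)) :
    (o₁ = o₃ ∧ o₂ = o₄) ∨ (o₁ = o₄ ∧ o₂ = o₃) := by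
  have hmonic₁₂ := (monicLinear_monic o₁).mul (monicLinear_monic o₂)
  have hl : l = 1 := by
    simpa [((monicLinear_monic o₃).mul (monicLinear_monic o₄)).leadingCoeff,
      hmonic₁₂.leadingCoeff] using (congrArg leadingCoeff h).symm
  rw [hl, C_1, one_mul] at h
  exact monicLinear_mul_eq_mul h.symm

end MonicLinear

section Singer

variable {k K : Type*} [Field k] [Field K] [Algebra k K]

lemma eq_of_aeval_eq_of_natDegree_lt {θ : K} {P Q : k[X]}
    (hP : P.natDegree < (minpoly k θ).natDegree) (hQ : Q.natDegree < (minpoly k θ).natDegree)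
    (h : aeval θ P = aeval θ Q) : P = Q := by
  by_contra hne
  have hle := natDegree_le_natDegree <|
    minpoly.degree_le_of_ne_zero k θ (sub_ne_zero.mpr hne) (by rw [map_sub, h, sub_self])
  have := natDegree_sub_le P Q
  omega

lemma aeval_monicLinear_ne_zero {θ : K} (hθ : 1 < (minpoly k θ).natDegree) (o : Option k) :
    aeval θ (monicLinear o) ≠ 0 := fun h =>
  (monicLinear_monic o).ne_zero <| eq_of_aeval_eq_of_natDegree_lt
    ((natDegree_monicLinear_le o).trans_lt hθ) (by rw [natDegree_zero]; omega)
    (h.trans (map_zero _).symm)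

abbrev scalarUnits (k K : Type*) [Field k] [Field K] [Algebra k K] : Subgroup Kˣ :=
  (Units.map (algebraMap k K).toMonoidHom).range

lemma exists_eq_algebraMap_mul_of_mk_eq {x y : Kˣ}
    (h : (x : Kˣ ⧸ scalarUnits k K) = y) : ∃ l : k, (y : K) = algebraMap k K l * x := by
  obtain ⟨u, hu⟩ := QuotientGroup.eq.mp h
  refine ⟨u, ?_⟩
  have hu' : algebraMap k K u = (x : K)⁻¹ * y := by simpa using congrArg Units.val hu
  rw [hu']
  field_simp

noncomputable def singerPoint {θ : K} (hθ : 1 < (minpoly k θ).natDegree) (o : Option k) :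
    Kˣ ⧸ scalarUnits k K :=
  Units.mk0 _ (aeval_monicLinear_ne_zero hθ o)

lemma singerPoint_mul_eq_mul {θ : K} (hθ : 2 < (minpoly k θ).natDegree)
    {o₁ o₂ o₃ o₄ : Option k}
    (h : singerPoint (one_lt_two.trans hθ) o₁ * singerPoint (one_lt_two.trans hθ) o₂ =
      singerPoint (one_lt_two.trans hθ) o₃ * singerPoint (one_lt_two.trans hθ) o₄) :
    (o₁ = o₃ ∧ o₂ = o₄) ∨ (o₁ = o₄ ∧ o₂ = o₃) := by
  simp only [singerPoint, ← QuotientGroup.mk_mul] at h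
  obtain ⟨l, hl⟩ := exists_eq_algebraMap_mul_of_mk_eq h
  simp only [Units.val_mul, Units.val_mk0, ← map_mul] at hl
  refine monicLinear_mul_eq_C_mul (l := l) (eq_of_aeval_eq_of_natDegree_lt (θ := θ) ?_ ?_ ?_)
  · exact (natDegree_monicLinear_mul_le o₃ o₄).trans_lt hθ
  · exact (natDegree_C_mul_le _ _).trans_lt ((natDegree_monicLinear_mul_le o₁ o₂).trans_lt hθ)
  · rw [map_mul (aeval θ) (C l), aeval_C, hl]

lemma card_units_quotient_scalarUnits [Finite K] (h : Module.finrank k K = 3) :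
    Nat.card (Kˣ ⧸ scalarUnits k K) = Nat.card k ^ 2 + Nat.card k + 1 := by
  have : Finite k := Finite.of_injective _ (algebraMap k K).injective
  have := Fintype.ofFinite k
  have := Fintype.ofFinite K
  have hK : Nat.card Kˣ = Nat.card k ^ 3 - 1 := by
    rw [Nat.card_units, Nat.card_eq_fintype_card, Nat.card_eq_fintype_card,
      Module.card_eq_pow_finrank (K := k), h]
  have hk : Nat.card (scalarUnits k K) = Nat.card k - 1 := by
    rw [← Nat.card_congr (MonoidHom.ofInjective
      (Units.map_injective (f := (algebraMap k K).toMonoidHom) (algebraMap k K).injective)).toEquiv,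
      Nat.card_units]
  have hsplit := Subgroup.card_eq_card_quotient_mul_card_subgroup (scalarUnits k K)
  rw [hK, hk] at hsplit
  have hq : 1 < Nat.card k := Finite.one_lt_card
  obtain ⟨r, hr⟩ : ∃ r, Nat.card k = r + 1 := ⟨Nat.card k - 1, by omega⟩
  have hr_pos : 0 < r := by omega
  rw [hr, Nat.add_sub_cancel] at hsplit
  rw [hr]
  have hcube : (r + 1) ^ 3 = ((r + 1) ^ 2 + (r + 1) + 1) * r + 1 := by ring
  exact (Nat.eq_of_mul_eq_mul_right hr_pos (by omega)).symm

theorem exists_isSidon_zmod_of_finrank_eq_three [Finite K] (h : Module.finrank k K = 3) :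
    ∃ A : Finset (ZMod (Nat.card k ^ 2 + Nat.card k + 1)), IsSidon A ∧ #A = Nat.card k + 1 := by
  have : Finite k := Finite.of_injective _ (algebraMap k K).injective
  have := Fintype.ofFinite k
  obtain ⟨θ, hθ⟩ := Field.exists_primitive_element k K
  have hdeg : 2 < (minpoly k θ).natDegree := by
    rw [(Field.primitive_element_iff_minpoly_natDegree_eq k θ).mp hθ, h]; norm_num
  have : IsCyclic (Kˣ ⧸ scalarUnits k K) :=
    isCyclic_of_surjective _ (QuotientGroup.mk'_surjective _)
  let e : Kˣ ⧸ scalarUnits k K ≃* Multiplicative (ZMod (Nat.card k ^ 2 + Nat.card k + 1)) :=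
    mulEquivOfCyclicCardEq <| (card_units_quotient_scalarUnits h).trans (Nat.card_zmod _).symm
  let g (o : Option k) := (e (singerPoint (one_lt_two.trans hdeg) o)).toAdd
  have hg : IsSidonFamily g := fun o₁ o₂ o₃ o₄ hsum =>
    singerPoint_mul_eq_mul hdeg <| e.injective <| by simpa [g, ← toAdd_mul] using hsum
  refine ⟨univ.image g, hg.isSidon_image univ, ?_⟩
  rw [card_image_of_injective _ hg.injective, card_univ, Fintype.card_option,
    Nat.card_eq_fintype_card]

end Singer

theorem stmt_5 (p : ℕ) (hp : p.Prime) :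
    ∃ A : Finset (ZMod (p ^ 2 + p + 1)),
      (∀ n : ZMod (p ^ 2 + p + 1), repFn A n ≤ 2) ∧
      (({n : ZMod (p ^ 2 + p + 1) | repFn A n = 2}.ncard : ℝ) =
        (1 / 2 : ℝ) * (p ^ 2 + p + 1) - 1 / 2) := by
  have := Fact.mk hp
  have hsidon := exists_isSidon_zmod_of_finrank_eq_three (K := GaloisField p 3)
    (GaloisField.finrank p three_ne_zero)
  rw [Nat.card_zmod] at hsidon
  obtain ⟨A, hA, hcard⟩ := hsidon
  refine ⟨A, hA.repFn_le_two, ?_⟩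
  have hcount := hA.two_mul_ncard_repFn_eq_two
  rw [hcard, Nat.add_sub_cancel] at hcount
  have hcount' : (2 : ℝ) * {n | repFn A n = 2}.ncard = (p + 1) * p := by exact_mod_cast hcount
  linarith
end

section
/- Let G be a finite abelian group with |G| = m and let A ⊆ G. If R_A(g) ≤ 7 for all g ∈ G, then the number of elements g ∈ G with R_A(g) = 4 satisfies |S_4| ≤ (3/4)m + √(7m) + 3/4. -/
/-!
Write `r = repFn A`, `x = #A`, `m = #G` and `E = ∑ r² = E[A]`. Since `r ≤ 7` and `r (7 - r) ≥ 12`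
at `r = 4`, we get `E + 12 #S₄ ≤ 7x²`. Counting `E` by differences instead, `E = ∑_d D(d)²`, where
`D(0) = x` and `∑_{d ≠ 0} D(d) = x² - x`, so Cauchy–Schwarz over the `m - 1` nonzero differences
gives `(x² - x)² ≤ (m - 1)(E - x²)`. Together these yield `12 #S₄ ≤ 6x + 9(m - 1)`, and
`x² = ∑ r ≤ 7m` finishes the proof.
-/

open Finset
open scoped Combinatorics.Additive

lemma sum_sq_card_filter_eq {ι κ : Type*} [DecidableEq κ] [Fintype κ] (s : Finset ι) (f : ι → κ) :
    ∑ k, #{i ∈ s | f i = k} ^ 2 = #{p ∈ s ×ˢ s | f p.1 = f p.2} := by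
  rw [card_eq_sum_card_fiberwise (f := fun p => f p.1) (t := univ) fun _ _ => mem_univ _]
  refine sum_congr rfl fun k _ => ?_
  rw [sq, ← card_product, filter_filter, ← filter_product]
  congr 1
  exact filter_congr fun p _ => by constructor <;> rintro ⟨h1, h2⟩ <;> simp_all

section
variable {G : Type*} [AddCommGroup G] [DecidableEq G]

lemma addEnergy_eq_sum_sq_card_sub [Fintype G] (s : Finset G) :
    E[s] = ∑ d, #{xy ∈ s ×ˢ s | xy.1 - xy.2 = d} ^ 2 := by
  rw [sum_sq_card_filter_eq, addEnergy]
  refine card_nbij' (fun x => ((x.1.1, x.2.2), (x.1.2, x.2.1)))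
    (fun y => ((y.1.1, y.2.1), (y.2.2, y.1.2))) ?_ ?_ (fun _ _ => rfl) (fun _ _ => rfl)
  · rintro ⟨⟨a₁, a₂⟩, b₁, b₂⟩
    simp only [coe_filter, mem_product, Set.mem_ofPred_eq]
    rintro ⟨⟨⟨h1, h2⟩, h3, h4⟩, h⟩
    exact ⟨⟨⟨h1, h4⟩, h2, h3⟩, by rw [sub_eq_sub_iff_add_eq_add, h, add_comm]⟩
  · rintro ⟨⟨a₁, a₂⟩, b₁, b₂⟩
    simp only [coe_filter, mem_product, Set.mem_ofPred_eq]
    rintro ⟨⟨⟨h1, h2⟩, h3, h4⟩, h⟩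
    exact ⟨⟨⟨h1, h3⟩, h4, h2⟩, by rw [sub_eq_sub_iff_add_eq_add] at h; rw [h, add_comm]⟩

lemma card_filter_sub_eq_zero (s : Finset G) : #{xy ∈ s ×ˢ s | xy.1 - xy.2 = 0} = #s := by
  have : {xy ∈ s ×ˢ s | xy.1 - xy.2 = 0} = s.diag := by
    ext ⟨a, b⟩
    simp only [mem_filter, mem_product, sub_eq_zero, mem_diag]
    constructor
    · rintro ⟨⟨ha, -⟩, rfl⟩; exact ⟨ha, rfl⟩
    · rintro ⟨ha, rfl⟩; exact ⟨⟨ha, ha⟩, rfl⟩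
  rw [this, diag_card]

variable [Fintype G]

lemma sum_card_filter_sub_eq (s : Finset G) : ∑ d, #{xy ∈ s ×ˢ s | xy.1 - xy.2 = d} = #s ^ 2 := by
  rw [← card_eq_sum_card_fiberwise fun _ _ => mem_univ _, card_product, sq]

lemma card_sq_le_mul_card_of_repFn_le (A : Finset G) {k : ℕ} (h : ∀ g, repFn A g ≤ k) :
    #A ^ 2 ≤ k * Fintype.card G := by
  rw [← sum_repFn, ← card_univ, mul_comm, ← smul_eq_mul, ← sum_const]
  exact sum_le_sum fun g _ => h g

lemma sq_sub_add_card_mul_sq_le_card_mul_addEnergy (s : Finset G) :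
    (#s ^ 2 - #s) ^ 2 + (Fintype.card G - 1) * #s ^ 2 ≤ (Fintype.card G - 1) * E[s] := by
  set D : G → ℕ := fun d => #{xy ∈ s ×ˢ s | xy.1 - xy.2 = d}
  have hD0 : D 0 = #s := card_filter_sub_eq_zero s
  have hsum : ∑ d ∈ univ.erase 0, D d = #s ^ 2 - #s := by
    have := sum_erase_add univ D (mem_univ 0)
    rw [sum_card_filter_sub_eq, hD0] at this
    omega
  have hsum_sq : ∑ d ∈ univ.erase 0, D d ^ 2 + #s ^ 2 = E[s] := by
    rw [addEnergy_eq_sum_sq_card_sub, ← sum_erase_add univ (D · ^ 2) (mem_univ 0), hD0]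
  have hcard : #(univ.erase (0 : G)) = Fintype.card G - 1 := by
    rw [card_erase_of_mem (mem_univ _), card_univ]
  have := sq_sum_le_card_mul_sum_sq (s := univ.erase (0 : G)) (f := D)
  rw [hsum, hcard, Nat.cast_id] at this
  rw [← hsum_sq, mul_add]
  omega

lemma sq_add_twelve_mul_ite_le {r : ℕ} (hr : r ≤ 7) :
    r ^ 2 + 12 * (if r = 4 then 1 else 0) ≤ 7 * r := by
  interval_cases r <;> simp

lemma addEnergy_add_twelve_mul_card_repFn_eq_four_le (A : Finset G) (h : ∀ g, repFn A g ≤ 7) :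
    E[A] + 12 * #{g | repFn A g = 4} ≤ 7 * #A ^ 2 := by
  rw [addEnergy_eq_sum_sq, ← sum_repFn, card_filter, mul_sum, mul_sum, ← sum_add_distrib]
  exact sum_le_sum fun g _ => sq_add_twelve_mul_ite_le (h g)

lemma twelve_mul_card_repFn_eq_four_le (A : Finset G) (h : ∀ g, repFn A g ≤ 7) (hG : 1 < Fintype.card G) :
    12 * (#{g | repFn A g = 4} : ℝ) ≤ 6 * #A + 9 * (Fintype.card G - 1) := by
  have hCS := sq_sub_add_card_mul_sq_le_card_mul_addEnergy A
  have hE := addEnergy_add_twelve_mul_card_repFn_eq_four_le A h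
  rw [← Nat.cast_le (α := ℝ)] at hCS hE
  push_cast [Nat.cast_sub (Nat.le_self_pow two_ne_zero _), Nat.cast_sub hG.le] at hCS hE
  have hG' : (1 : ℝ) < Fintype.card G := by exact_mod_cast hG
  refine le_of_mul_le_mul_left ?_ (sub_pos.2 hG')
  -- AM-GM: `6 (m - 1) y - y² ≤ 9 (m - 1)²` for `y = x² - x`
  nlinarith [sq_nonneg ((#A : ℝ) ^ 2 - #A - 3 * (Fintype.card G - 1))]

end

theorem stmt_6 {G : Type*} [AddCommGroup G] [Fintype G] [DecidableEq G]
    (m : ℕ) (hm : Fintype.card G = m) (A : Finset G)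
    (h : ∀ g : G, repFn A g ≤ 7) :
    (((Finset.univ.filter fun g : G => repFn A g = 4).card : ℝ)) ≤
      (3 / 4 : ℝ) * m + Real.sqrt (7 * m) + 3 / 4 := by
  subst hm
  obtain hG | hG := Nat.one_le_iff_ne_zero.2 (Fintype.card_ne_zero (α := G)) |>.eq_or_lt
  · have hn : (#{g | repFn A g = 4} : ℝ) ≤ Fintype.card G := by
      exact_mod_cast (card_filter_le _ _).trans (card_univ (α := G)).le
    have hG' : (Fintype.card G : ℝ) = 1 := by exact_mod_cast hG.symm
    linarith [Real.sqrt_nonneg (7 * Fintype.card G : ℝ)]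
  have hA : (#A : ℝ) ≤ Real.sqrt (7 * Fintype.card G) :=
    Real.le_sqrt_of_sq_le (by exact_mod_cast card_sq_le_mul_card_of_repFn_le A h)
  linarith [twelve_mul_card_repFn_eq_four_le A h hG, Real.sqrt_nonneg (7 * Fintype.card G : ℝ)]
end

section
/- Let G be a finite abelian group with |G| = m and let A ⊆ G. Then for any positive integer k, the sum over all g ∈ G of (R_A(g) − k)² is at least km − (2k − 1)|A| + k² − k. -/
open Finset
open scoped Combinatorics.Additive

def diffFn {G : Type*} [AddCommGroup G] [DecidableEq G] (A : Finset G) (t : G) : ℕ :=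
  #{p ∈ A ×ˢ A | p.1 - p.2 = t}

lemma Int.sq_add_self_nonneg (x : ℤ) : 0 ≤ x ^ 2 + x := by
  rcases le_or_gt 0 x with hx | hx <;> nlinarith

lemma Finset.sum_sub_const_sq {ι : Type*} [Fintype ι] (f : ι → ℤ) (c : ℤ) :
    ∑ i, (f i - c) ^ 2 = ∑ i, f i ^ 2 - 2 * c * ∑ i, f i + Fintype.card ι * c ^ 2 := by
  simp only [sub_sq, sum_add_distrib, sum_sub_distrib, ← sum_mul, ← mul_sum, sum_const,
    card_univ, nsmul_eq_mul]
  ring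

section Fibers

variable {ι κ : Type*} [Fintype κ] [DecidableEq κ]

lemma Finset.sum_card_fiber (s : Finset ι) (f : ι → κ) : ∑ b, #{x ∈ s | f x = b} = #s :=
  (card_eq_sum_card_fiberwise fun _ _ => mem_univ _).symm

lemma Finset.sum_card_fiber_sq (s : Finset ι) (f : ι → κ) :
    ∑ b, #{x ∈ s | f x = b} ^ 2 = #{p ∈ s ×ˢ s | f p.1 = f p.2} := by
  rw [card_eq_sum_card_fiberwise (f := fun p => f p.1) fun _ _ => mem_univ _]
  refine sum_congr rfl fun b _ => ?_
  rw [sq, ← card_product, filter_filter]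
  congr 1
  ext ⟨x, y⟩
  simp only [mem_product, mem_filter]
  grind

end Fibers

section Representations

variable {G : Type*} [AddCommGroup G] [DecidableEq G]

lemma diffFn_zero (A : Finset G) : diffFn A 0 = #A := by
  simp only [diffFn, sub_eq_zero, ← diag_eq_filter, diag_card]

variable [Fintype G]

lemma sum_diffFn (A : Finset G) : ∑ t, diffFn A t = #A ^ 2 :=
  (sum_card_fiber (A ×ˢ A) fun p => p.1 - p.2).trans (by rw [card_product, sq])

lemma sum_diffFn_sq (A : Finset G) : ∑ t, diffFn A t ^ 2 = E[A] := by
  unfold diffFn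
  rw [sum_card_fiber_sq, addEnergy]
  refine card_equiv ((Equiv.refl _).prodCongr (Equiv.prodComm _ _)) fun q => ?_
  obtain ⟨⟨a, a'⟩, b, b'⟩ := q
  simp only [mem_filter, mem_product, Equiv.prodCongr_apply, Equiv.coe_refl, Prod.map,
    id, Equiv.prodComm_apply, Prod.swap, sub_eq_sub_iff_add_eq_add]
  grind

lemma sum_repFn_sub_sq_eq_sum_diffFn_sub_sq (A : Finset G) (k : ℤ) :
    ∑ g, ((repFn A g : ℤ) - k) ^ 2 = ∑ t, ((diffFn A t : ℤ) - k) ^ 2 := by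
  have h_sum : ∑ g, (repFn A g : ℤ) = ∑ t, (diffFn A t : ℤ) := by
    exact_mod_cast (sum_repFn A).trans (sum_diffFn A).symm
  have h_sum_sq : ∑ g, (repFn A g : ℤ) ^ 2 = ∑ t, (diffFn A t : ℤ) ^ 2 := by
    exact_mod_cast (sum_repFn_sq A).trans (sum_diffFn_sq A).symm
  rw [sum_sub_const_sq, sum_sub_const_sq, h_sum, h_sum_sq]

end Representations

theorem stmt_9_general {G : Type*} [AddCommGroup G] [Fintype G] [DecidableEq G]
    (m : ℕ) (hm : Fintype.card G = m) (A : Finset G) (k : ℕ) :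
    (∑ g : G, ((repFn A g : ℤ) - k) ^ 2) ≥
      k * m - (2 * k - 1) * A.card + k ^ 2 - k := by
  subst hm
  rw [sum_repFn_sub_sq_eq_sum_diffFn_sub_sq]
  have hsum : ∑ t, (diffFn A t : ℤ) = #A ^ 2 := by exact_mod_cast sum_diffFn A
  have h_term_zero := single_le_sum (f := fun t => ((diffFn A t : ℤ) - k) ^ 2 + ((diffFn A t : ℤ) - k))
    (fun t _ => Int.sq_add_self_nonneg _) (mem_univ 0)
  simp only [sum_add_distrib, sum_sub_distrib, hsum, sum_const, card_univ, nsmul_eq_mul,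
    diffFn_zero] at h_term_zero
  linarith

theorem stmt_9 {G : Type*} [AddCommGroup G] [Fintype G] [DecidableEq G]
    (m : ℕ) (hm : Fintype.card G = m) (A : Finset G) (k : ℕ) (hk : 0 < k) :
    (∑ g : G, ((repFn A g : ℤ) - k) ^ 2) ≥
      k * m - (2 * k - 1) * A.card + k ^ 2 - k :=
  stmt_9_general m hm A k
end

section
/- Let p be a prime (more generally a prime power) and q = p² + p + 1. Then there exists a subset A ⊆ ℤ_q such that R_{A,−A}(n) = 1 for all nonzero n ∈ ℤ_q. -/
/-- `repFn2 A B g` is the number of ordered pairs `(a, b) ∈ A × B` with `a + b = g`. -/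
def repFn2 {G : Type*} [AddCommGroup G] [DecidableEq G] (A B : Finset G) (g : G) : ℕ :=
  ((A ×ˢ B).filter fun p => p.1 + p.2 = g).card

/-!
Singer's construction. Let `K = 𝔽_p` and `F = 𝔽_{p³}`, a three-dimensional `K`-space. The points
of the projective plane `ℙ(F)` form the cyclic group `Fˣ ⧸ Kˣ` of order `p² + p + 1`; let `A` be
the set of points of a projective line, i.e. of a plane `L ⊆ F`. If the class `n ≠ 0` is
represented by `c ∉ K`, the pairs realising `n` as a difference in `A` correspond to the points of
`L ∩ c⁻¹L`. A plane is stable only under multiplication by scalars, so `c⁻¹L ≠ L`, and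
`L ∩ c⁻¹L` is the intersection of two distinct projective lines: exactly one point.
-/

open Module

theorem repFn2_image_neg {G : Type*} [AddCommGroup G] [DecidableEq G] (A : Finset G) (g : G) :
    repFn2 A (A.image fun a => -a) g = (A.filter fun b => g + b ∈ A).card := by
  unfold repFn2
  refine Finset.card_nbij' (fun x => -x.2) (fun b => (g + b, -b)) ?_ ?_ ?_ ?_
  · rintro ⟨a, _⟩ hab
    simp only [Finset.coe_filter, Finset.mem_product, Finset.mem_image, Set.mem_ofPred_eq] at hab ⊢
    obtain ⟨⟨ha, b, hb, rfl⟩, rfl⟩ := hab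
    simpa [hb] using ha
  · intro b hb
    simp only [Finset.coe_filter, Finset.mem_product, Finset.mem_image, Set.mem_ofPred_eq] at hb ⊢
    exact ⟨⟨hb.2, b, hb.1, rfl⟩, by abel⟩
  · rintro ⟨a, b⟩ hab
    simp only [Finset.coe_filter, Set.mem_ofPred_eq] at hab
    simp [← hab.2]
  · intro b _
    simp

theorem exists_submodule_finrank_eq {K V : Type*} [DivisionRing K] [AddCommGroup V] [Module K V]
    [FiniteDimensional K V] {d : ℕ} (hd : d ≤ finrank K V) :
    ∃ L : Submodule K V, finrank K L = d := by
  let b := finBasis K V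
  refine ⟨Submodule.span K (Set.range (b ∘ Fin.castLE hd)), ?_⟩
  rw [finrank_span_eq_card (b.linearIndependent.comp _ (Fin.castLE_injective hd)), Fintype.card_fin]

section

variable {K F : Type*} [Field K] [Field F] [Algebra K F]

/-- If `c ∉ K`, then `c` has degree `finrank K F`, so for `x ≠ 0` in `L` the vectors
`x, c x, …, c ^ (finrank K F - 1) x` would be independent and fill `F`. -/
theorem mem_range_algebraMap_of_mul_mem [FiniteDimensional K F] (hF : (finrank K F).Prime)
    {L : Submodule K F} (hbot : L ≠ ⊥) (htop : L ≠ ⊤) {c : F} (hc : ∀ x ∈ L, c * x ∈ L) :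
    c ∈ (algebraMap K F).range := by
  rcases hF.eq_one_or_self_of_dvd _ (minpoly.degree_dvd (.of_finite K c)) with h | h
  · exact minpoly.natDegree_eq_one_iff.mp h
  obtain ⟨x, hxL, hx⟩ := Submodule.exists_mem_ne_zero_of_ne_bot hbot
  let v : Fin (minpoly K c).natDegree → F := fun i => c ^ (i : ℕ) * x
  have hind : LinearIndependent K v :=
    (linearIndependent_pow c).map' (LinearMap.mulRight K x)
      (LinearMap.ker_eq_bot.mpr (mul_left_injective₀ hx))
  have hpow : ∀ i : ℕ, c ^ i * x ∈ L := by
    intro i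
    induction i with
    | zero => simpa using hxL
    | succ i ih => simpa [pow_succ', mul_assoc] using hc _ ih
  refine (htop (Submodule.eq_top_of_finrank_eq (le_antisymm (Submodule.finrank_le L) ?_))).elim
  calc finrank K F = finrank K (Submodule.span K (Set.range v)) := by
        rw [finrank_span_eq_card hind, Fintype.card_fin, h]
    _ ≤ finrank K L :=
        Submodule.finrank_mono (Submodule.span_le.mpr (Set.range_subset_iff.mpr fun i => hpow i))

theorem finrank_comap_mulLeft (L : Submodule K F) {c : F} (hc : c ≠ 0) :
    finrank K (L.comap (LinearMap.mulLeft K c)) = finrank K L := by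
  have h : L.comap (LinearMap.mulLeft K c) =
      L.comap (DistribMulAction.toLinearEquiv K F (Units.mk0 c hc) : F →ₗ[K] F) := rfl
  rw [h, Submodule.comap_equiv_eq_map_symm, LinearEquiv.finrank_map_eq]

theorem finrank_inf_comap_mulLeft_eq_one [FiniteDimensional K F] (hF : finrank K F = 3)
    {L : Submodule K F} (hL : finrank K L = 2) {c : F} (hc : c ∉ (algebraMap K F).range) :
    finrank K ↥(L ⊓ L.comap (LinearMap.mulLeft K c)) = 1 := by
  have hc0 : c ≠ 0 := fun h => hc (h ▸ zero_mem _)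
  set Lc := L.comap (LinearMap.mulLeft K c)
  have hbot : L ≠ ⊥ := by rintro rfl; simp at hL
  have htop : L ≠ ⊤ := by rintro rfl; rw [finrank_top, hF] at hL; cases hL
  have hlt : L ⊓ Lc < L := inf_le_left.lt_of_ne fun h => hc <|
    mem_range_algebraMap_of_mul_mem (hF ▸ Nat.prime_three) hbot htop fun x hx =>
      inf_eq_left.mp h hx
  have h₁ := Submodule.finrank_lt_finrank_of_lt hlt
  have h₂ := Submodule.finrank_sup_add_finrank_inf_eq L Lc
  have h₃ := Submodule.finrank_le (L ⊔ Lc)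
  rw [finrank_comap_mulLeft L hc0] at h₂
  omega

section UnitsQuotient

variable {M : Type*} [Group M] {π : Fˣ →* M}
  (hπ : π.ker = (Units.map (algebraMap K F).toMonoidHom).range)
include hπ

theorem map_eq_map_iff_exists_smul {u v : Fˣ} : π u = π v ↔ ∃ k : K, (v : F) = k • (u : F) := by
  rw [eq_comm, MonoidHom.eq_iff, hπ]
  constructor
  · rintro ⟨k, hk⟩
    refine ⟨k, ?_⟩
    rw [Algebra.smul_def, show algebraMap K F k = ((u⁻¹ * v : Fˣ) : F) from congrArg Units.val hk,
      ← Units.val_mul, mul_comm, mul_inv_cancel_left]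
  · rintro ⟨k, hk⟩
    have hk0 : k ≠ 0 := by rintro rfl; simp at hk
    refine ⟨Units.mk0 k hk0, Units.ext ?_⟩
    simp only [Units.coe_map, Units.val_mk0, Units.val_mul, Units.val_inv_eq_inv_val]
    rw [hk, Algebra.smul_def, mul_comm, mul_inv_cancel_right₀ u.ne_zero]
    rfl

theorem exists_forall_mem_mul_mem_map_eq [FiniteDimensional K F] (hF : finrank K F = 3)
    {L : Submodule K F} (hL : finrank K L = 2) {c : Fˣ}
    (hc : (c : F) ∉ (algebraMap K F).range) :
    ∃ w : Fˣ, (w : F) ∈ L ∧ (c * w : F) ∈ L ∧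
      ∀ v : Fˣ, (v : F) ∈ L → (c * v : F) ∈ L → π v = π w := by
  have hW := finrank_inf_comap_mulLeft_eq_one hF hL hc
  obtain ⟨w, hw0⟩ := finrank_pos_iff_exists_ne_zero.mp (hW ▸ one_pos)
  refine ⟨Units.mk0 w (by simpa using hw0), w.2.1, w.2.2, fun v hvL hcv => ?_⟩
  obtain ⟨k, hk⟩ := (finrank_eq_one_iff_of_nonzero' w hw0).mp hW ⟨v, hvL, hcv⟩
  exact ((map_eq_map_iff_exists_smul hπ).mpr ⟨k, (congrArg Subtype.val hk).symm⟩).symm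

end UnitsQuotient

theorem exists_surjective_ker_eq_range_unitsMap [Finite F] {q : ℕ}
    (hq : (Nat.card K - 1) * q = Nat.card F - 1) :
    ∃ π : Fˣ →* Multiplicative (ZMod q), Function.Surjective π ∧
      π.ker = (Units.map (algebraMap K F).toMonoidHom).range := by
  set H := (Units.map (algebraMap K F).toMonoidHom).range
  have : Finite K := Finite.of_injective _ (algebraMap K F).injective
  have hH : Nat.card H = Nat.card K - 1 := by
    rw [← Nat.card_congr (MonoidHom.ofInjective
      (Units.map_injective (algebraMap K F).injective)).toEquiv, Nat.card_units]
  have hQ : Nat.card (Fˣ ⧸ H) = Nat.card (Multiplicative (ZMod q)) := by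
    have hlag := H.card_eq_card_quotient_mul_card_subgroup
    rw [Nat.card_units, ← hq, hH, mul_comm] at hlag
    rw [Nat.card_congr Multiplicative.toAdd, Nat.card_zmod]
    exact (Nat.eq_of_mul_eq_mul_right (Nat.sub_pos_of_lt Finite.one_lt_card) hlag).symm
  have : IsCyclic (Fˣ ⧸ H) := isCyclic_of_surjective _ (QuotientGroup.mk'_surjective H)
  let e := mulEquivOfCyclicCardEq hQ
  refine ⟨e.toMonoidHom.comp (QuotientGroup.mk' H),
    e.surjective.comp (QuotientGroup.mk'_surjective H), ?_⟩
  rw [MonoidHom.ker_comp_of_injective _ _ e.injective, QuotientGroup.ker_mk']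

section SingerSet

variable {G : Type*} [AddCommGroup G]

def singerSet (π : Fˣ →* Multiplicative G) (L : Submodule K F) : Set G :=
  Set.range fun u : {u : Fˣ // (u : F) ∈ L} => (π u).toAdd

theorem existsUnique_add_mem_singerSet [FiniteDimensional K F] (hF : finrank K F = 3)
    {π : Fˣ →* Multiplicative G} (hsurj : Function.Surjective π)
    (hπ : π.ker = (Units.map (algebraMap K F).toMonoidHom).range)
    {L : Submodule K F} (hL : finrank K L = 2) {n : G} (hn : n ≠ 0) :
    ∃! b, b ∈ singerSet π L ∧ n + b ∈ singerSet π L := by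
  obtain ⟨c, hc⟩ := hsurj (.ofAdd n)
  have hcK : (c : F) ∉ (algebraMap K F).range := by
    rintro ⟨k, hk⟩
    have h1c : π 1 = π c :=
      (map_eq_map_iff_exists_smul hπ).mpr
        ⟨k, by rw [← hk, Units.val_one, Algebra.smul_def, mul_one]⟩
    rw [hc, map_one, eq_comm, ofAdd_eq_one] at h1c
    exact hn h1c
  obtain ⟨w, hwL, hcwL, hw⟩ := exists_forall_mem_mul_mem_map_eq hπ hF hL hcK
  refine ⟨(π w).toAdd, ⟨⟨⟨w, hwL⟩, rfl⟩, ⟨c * w, by simpa using hcwL⟩, by simp [hc]⟩, ?_⟩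
  rintro _ ⟨⟨⟨v, hvL⟩, rfl⟩, ⟨u, huL⟩, hu⟩
  have hcv : π u = π (c * v) := by
    rw [map_mul, hc]
    exact congrArg Multiplicative.ofAdd hu
  obtain ⟨k, hk⟩ := (map_eq_map_iff_exists_smul hπ).mp hcv
  have hcvL : ((c * v : Fˣ) : F) ∈ L := hk ▸ L.smul_mem k huL
  exact congrArg Multiplicative.toAdd (hw v hvL hcvL)

end SingerSet

end

theorem stmt_19 (p : ℕ) (hp : IsPrimePow p) :
    ∃ A : Finset (ZMod (p ^ 2 + p + 1)),
      ∀ n : ZMod (p ^ 2 + p + 1), n ≠ 0 →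
        repFn2 A (A.image fun a => -a) n = 1 := by
  obtain ⟨m, hm⟩ : ∃ m, p = m + 1 := ⟨p - 1, (Nat.sub_add_cancel hp.one_lt.le).symm⟩
  obtain ⟨r, k, hr, hk, hrk⟩ := hp
  have : Fact r.Prime := ⟨hr.nat_prime⟩
  let K := GaloisField r k
  let F := FiniteField.Extension K r 3
  have hK : Nat.card K = p := hrk ▸ GaloisField.card r k hk.ne'
  obtain ⟨π, hsurj, hπ⟩ := exists_surjective_ker_eq_range_unitsMap (K := K) (F := F)
    (q := p ^ 2 + p + 1) (by
      rw [FiniteField.natCard_extension, hK, hm, Nat.add_sub_cancel]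
      exact (Nat.sub_eq_of_eq_add (by ring)).symm)
  have hF : finrank K F = 3 := FiniteField.finrank_extension K r 3
  obtain ⟨L, hL⟩ := exists_submodule_finrank_eq (K := K) (V := F) (d := 2) (by rw [hF]; norm_num)
  refine ⟨(singerSet π L).toFinite.toFinset, fun n hn => ?_⟩
  rw [repFn2_image_neg, Finset.card_eq_one_iff_existsUnique]
  simpa using existsUnique_add_mem_singerSet hF hsurj hπ hL hn
end
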